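/- An up-down word w = w₁w₂⋯w_ℓ avoids the consecutive pattern 312 (i.e., there is no index j with w_{j+1} < w_{j+2} < w_j) if and only if the top elements of w (the letters at even positions) are weakly increasing from left to right. -/
import Mathlib


/-- `w` is an up-down word: `w₀ < w₁ > w₂ < w₃ > ⋯` (0-indexed). -/
def IsUpDown {l k : ℕ} (w : Fin l → Fin k) : Prop :=
  ∀ j : ℕ, ∀ h : j + 1 < l,
    (j % 2 = 0 → w ⟨j, by omega⟩ < w ⟨j + 1, h⟩) ∧
    (j % 2 = 1 → w ⟨j + 1, h⟩ < w ⟨j, by omega⟩)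

/-- `w` avoids the consecutive pattern 312. -/
def AvoidsC312 {l k : ℕ} (w : Fin l → Fin k) : Prop :=
  ∀ j : ℕ, ∀ h : j + 2 < l,
    ¬ (w ⟨j + 1, by omega⟩ < w ⟨j + 2, h⟩ ∧ w ⟨j + 2, h⟩ < w ⟨j, by omega⟩)

/-- An up-down word avoids the consecutive pattern 312 iff its top elements
(letters at even positions, i.e. 0-indexed odd positions) are weakly increasing. -/
theorem stmt_2 (l k : ℕ) (w : Fin l → Fin k) (hud : IsUpDown w) :
    AvoidsC312 w ↔
      (∀ m₁ m₂ : ℕ, ∀ h₁ : 2 * m₁ + 1 < l, ∀ h₂ : 2 * m₂ + 1 < l,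
        m₁ ≤ m₂ → w ⟨2 * m₁ + 1, h₁⟩ ≤ w ⟨2 * m₂ + 1, h₂⟩) := by
  have weq : ∀ a b : ℕ, ∀ ha : a < l, ∀ hb : b < l, a = b →
      w ⟨a, ha⟩ = w ⟨b, hb⟩ := fun a b ha hb h => congrArg w (Fin.ext h)
  constructor
  · intro hav
    have step : ∀ m : ℕ, ∀ h : 2 * m + 3 < l,
        w ⟨2 * m + 1, by omega⟩ ≤ w ⟨2 * m + 3, h⟩ := by
      intro m h
      have hup := (hud (2 * m + 2) (by omega)).1 (by omega)
      have hav' := hav (2 * m + 1) (by omega)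
      by_contra hlt
      push_neg at hlt
      refine hav' ⟨?_, ?_⟩
      · calc w ⟨2 * m + 1 + 1, by omega⟩ = w ⟨2 * m + 2, by omega⟩ :=
              weq _ _ _ _ (by omega)
          _ < w ⟨2 * m + 2 + 1, by omega⟩ := hup
          _ = w ⟨2 * m + 1 + 2, by omega⟩ := weq _ _ _ _ (by omega)
      · calc w ⟨2 * m + 1 + 2, by omega⟩ = w ⟨2 * m + 3, h⟩ := weq _ _ _ _ (by omega)
          _ < w ⟨2 * m + 1, by omega⟩ := hlt
    have key : ∀ d m : ℕ, ∀ h₁ : 2 * m + 1 < l, ∀ h₂ : 2 * (m + d) + 1 < l,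
        w ⟨2 * m + 1, h₁⟩ ≤ w ⟨2 * (m + d) + 1, h₂⟩ := by
      intro d
      induction d with
      | zero => intro m h₁ h₂; exact le_of_eq (weq _ _ _ _ (by omega))
      | succ n ih =>
        intro m h₁ h₂
        have hn : 2 * (m + n) + 1 < l := by omega
        have h3 : 2 * (m + n) + 3 < l := by omega
        calc w ⟨2 * m + 1, h₁⟩ ≤ w ⟨2 * (m + n) + 1, hn⟩ := ih m h₁ hn
          _ ≤ w ⟨2 * (m + n) + 3, h3⟩ := step (m + n) h3
          _ = w ⟨2 * (m + n + 1) + 1, h₂⟩ := weq _ _ _ _ (by omega)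
    intro m₁ m₂ h₁ h₂ hle
    have := key (m₂ - m₁) m₁ h₁ (by omega)
    calc w ⟨2 * m₁ + 1, h₁⟩ ≤ w ⟨2 * (m₁ + (m₂ - m₁)) + 1, by omega⟩ := this
      _ = w ⟨2 * m₂ + 1, h₂⟩ := weq _ _ _ _ (by omega)
  · intro hmono j h ⟨hab, hbc⟩
    rcases Nat.even_or_odd j with he | ho
    · have hj : j % 2 = 0 := Nat.even_iff.mp he
      have := (hud j (by omega)).1 hj
      exact absurd (lt_trans hab hbc) (not_lt.mpr (le_of_lt this))
    · obtain ⟨m, hm⟩ := ho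
      have h1 : 2 * m + 1 < l := by omega
      have h2 : 2 * (m + 1) + 1 < l := by omega
      have hle := hmono m (m + 1) h1 h2 (by omega)
      have heq1 : w ⟨2 * m + 1, h1⟩ = w ⟨j, by omega⟩ := weq _ _ _ _ (by omega)
      have heq2 : w ⟨2 * (m + 1) + 1, h2⟩ = w ⟨j + 2, h⟩ := weq _ _ _ _ (by omega)
      rw [heq1, heq2] at hle
      exact absurd hbc (not_lt.mpr hle)
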